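/- Let d be an integer with d ≥ 5, and regard M(d), the 3×3 matrix with rows (−d, 2d, −1), (−1, 1, 0), (−1, 0, 0), as a matrix over ℂ. Then every complex eigenvalue λ of M(d) satisfies |λ| ≤ (d − 2 + √(d² − 4d))/2, and some eigenvalue attains this bound; i.e. the spectral radius of M(d) equals (d − 2 + √(d² − 4d))/2. -/

import Mathlib

/-!
The characteristic polynomial of `M(d)` factors as `(μ + 1)(μ² + (d - 2)μ + 1)`. With
`ρ = (d - 2 + √(d² - 4d))/2 ≥ 1`, the quadratic factor is `(μ + ρ)(μ + ρ⁻¹)`, so the eigenvalues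
are `-1`, `-ρ`, `-ρ⁻¹`, of moduli `1`, `ρ`, `ρ⁻¹`, and the largest of these is `ρ`.
-/

section Field

variable {K : Type*} [Field K]

def phiHMatrix (c : K) : Matrix (Fin 3) (Fin 3) K :=
  !![-c, 2 * c, -1; -1, 1, 0; -1, 0, 0]

theorem det_scalar_sub_phiHMatrix (c μ : K) :
    (algebraMap K (Matrix (Fin 3) (Fin 3) K) μ - phiHMatrix c).det
      = (μ + 1) * (μ ^ 2 + (c - 2) * μ + 1) := by
  rw [Matrix.det_fin_three]
  simp [phiHMatrix, Matrix.algebraMap_matrix_apply]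
  ring

theorem mem_spectrum_phiHMatrix_iff (c μ : K) :
    μ ∈ spectrum K (phiHMatrix c) ↔ μ = -1 ∨ μ ^ 2 + (c - 2) * μ + 1 = 0 := by
  rw [spectrum.mem_iff, Matrix.isUnit_iff_isUnit_det, isUnit_iff_ne_zero, not_ne_iff,
    det_scalar_sub_phiHMatrix, mul_eq_zero, add_eq_zero_iff_eq_neg]

end Field

noncomputable def perronRoot (t : ℝ) : ℝ := (t - 2 + √(t ^ 2 - 4 * t)) / 2

theorem perronRoot_sq (t : ℝ) (ht : 0 ≤ t ^ 2 - 4 * t) :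
    perronRoot t ^ 2 - (t - 2) * perronRoot t + 1 = 0 := by
  unfold perronRoot
  linear_combination Real.sq_sqrt ht / 4

theorem one_le_perronRoot {t : ℝ} (ht : 4 ≤ t) : 1 ≤ perronRoot t := by
  unfold perronRoot
  linarith [Real.sqrt_nonneg (t ^ 2 - 4 * t)]

theorem perronRoot_pos {t : ℝ} (ht : 4 ≤ t) : 0 < perronRoot t :=
  zero_lt_one.trans_le (one_le_perronRoot ht)

theorem norm_neg_perronRoot {t : ℝ} (ht : 4 ≤ t) : ‖-(perronRoot t : ℂ)‖ = perronRoot t := by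
  rw [norm_neg, Complex.norm_real, Real.norm_of_nonneg (perronRoot_pos ht).le]

theorem sq_add_mul_add_one_eq_mul {t : ℝ} (ht : 4 ≤ t) (μ : ℂ) :
    μ ^ 2 + ((t : ℂ) - 2) * μ + 1 = (μ + perronRoot t) * (μ + (perronRoot t : ℂ)⁻¹) := by
  have hρ : (perronRoot t : ℂ) ≠ 0 := by exact_mod_cast (perronRoot_pos ht).ne'
  have h := congrArg ((↑) : ℝ → ℂ) (perronRoot_sq t (by nlinarith))
  push_cast at h
  field_simp
  linear_combination (-μ) * h

theorem mem_spectrum_phiHMatrix_iff_of_four_le {t : ℝ} (ht : 4 ≤ t) (μ : ℂ) :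
    μ ∈ spectrum ℂ (phiHMatrix (t : ℂ)) ↔
      μ = -1 ∨ μ = -perronRoot t ∨ μ = -(perronRoot t : ℂ)⁻¹ := by
  rw [mem_spectrum_phiHMatrix_iff, sq_add_mul_add_one_eq_mul ht, mul_eq_zero,
    add_eq_zero_iff_eq_neg, add_eq_zero_iff_eq_neg]

theorem norm_le_perronRoot_of_mem_spectrum {t : ℝ} (ht : 4 ≤ t) {μ : ℂ}
    (hμ : μ ∈ spectrum ℂ (phiHMatrix (t : ℂ))) : ‖μ‖ ≤ perronRoot t := by
  have h1 := one_le_perronRoot ht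
  rcases (mem_spectrum_phiHMatrix_iff_of_four_le ht μ).1 hμ with rfl | rfl | rfl
  · simpa using h1
  · exact (norm_neg_perronRoot ht).le
  · rw [norm_neg, norm_inv, Complex.norm_real, Real.norm_of_nonneg (perronRoot_pos ht).le]
    exact (inv_le_one_of_one_le₀ h1).trans h1

theorem neg_perronRoot_mem_spectrum {t : ℝ} (ht : 4 ≤ t) :
    -(perronRoot t : ℂ) ∈ spectrum ℂ (phiHMatrix (t : ℂ)) :=
  (mem_spectrum_phiHMatrix_iff_of_four_le ht _).2 (Or.inr (Or.inl rfl))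

/-- For `d ≥ 5`, the spectral radius of `M(d)` is `(d − 2 + √(d² − 4d))/2`. -/
theorem spectralRadius_PhiH_large (d : ℤ) (hd : 5 ≤ d)
    (M : Matrix (Fin 3) (Fin 3) ℂ)
    (hM : M = !![-(d : ℂ), 2*(d : ℂ), -1; -1, 1, 0; -1, 0, 0]) :
    (∀ μ ∈ spectrum ℂ M,
        ‖μ‖ ≤ ((d : ℝ) - 2 + Real.sqrt ((d : ℝ) ^ 2 - 4 * (d : ℝ))) / 2) ∧
      (∃ μ ∈ spectrum ℂ M,
        ‖μ‖ = ((d : ℝ) - 2 + Real.sqrt ((d : ℝ) ^ 2 - 4 * (d : ℝ))) / 2) := by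
  have ht : (4 : ℝ) ≤ d := by exact_mod_cast (by omega : (4 : ℤ) ≤ d)
  have hM' : M = phiHMatrix ((d : ℝ) : ℂ) := by rw [hM, Complex.ofReal_intCast]; rfl
  subst hM'
  exact ⟨fun μ hμ => norm_le_perronRoot_of_mem_spectrum ht hμ,
    -(perronRoot d : ℂ), neg_perronRoot_mem_spectrum ht, norm_neg_perronRoot ht⟩
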